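/- (Theorem 3.3, training error bound.) Let A ∈ ℂ^{n×n} be Hermitian, τ > 0, and let (u_k)_{k≥0} and (x_k)_{k≥0} be sequences in ℂⁿ with x_0 = u_0 and x_{k+1} = (I + i(τ/2)A)⁻¹ (I − i(τ/2)A) x_k for all k ≥ 0. Define the residuals l_k(A) := i (u_{k+1} − u_k)/τ − A ((u_{k+1} + u_k)/2) and the errors e_k := u_k − x_k. Then for every k ≥ 0, ‖e_{k+1}‖₂ ≤ τ Σ_{i=0}^{k} ‖l_i(A)‖₂. -/

import Mathlib

open Matrix

noncomputable def euclNorm {n : ℕ} (v : Fin n → ℂ) : ℝ :=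
  Real.sqrt (∑ k, ‖v k‖ ^ 2)

/-!
Write `B = 1 + i(τ/2)A`, so that `Bᴴ = 1 - i(τ/2)A` for Hermitian `A`. Since `⟪v, A v⟫` is real,
`‖B v‖² = ‖v‖² + (τ/2)²‖A v‖²`; hence `B` is invertible and `B⁻¹` is a contraction, and as `B`
commutes with `Bᴴ` the Crank–Nicolson matrix `L = B⁻¹ Bᴴ` is unitary. The residual is exactly the
defect `B u_{k+1} - Bᴴ u_k = -iτ l_k`, so `e_{k+1} = L e_k - iτ B⁻¹ l_k` and
`‖e_{k+1}‖ ≤ ‖e_k‖ + τ ‖l_k‖`; telescoping from `e_0 = 0` gives the bound.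
-/

open WithLp

theorem LinearMap.IsSymmetric.norm_add_smul_apply_sq {𝕜 E : Type*} [RCLike 𝕜]
    [NormedAddCommGroup E] [InnerProductSpace 𝕜 E] {T : E →ₗ[𝕜] E} (hT : T.IsSymmetric)
    {c : 𝕜} (hc : RCLike.re c = 0) (x : E) :
    ‖x + c • T x‖ ^ 2 = ‖x‖ ^ 2 + ‖c‖ ^ 2 * ‖T x‖ ^ 2 := by
  have hre : RCLike.re (c * inner 𝕜 x (T x)) = 0 := by
    rw [← hT, ← hT.coe_re_inner_apply_self, RCLike.re_mul_ofReal, hc, zero_mul]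
  rw [norm_add_sq (𝕜 := 𝕜), inner_smul_right, hre, norm_smul, mul_pow]
  ring

theorem euclNorm_eq_norm_toLp {n : ℕ} (v : Fin n → ℂ) : euclNorm v = ‖toLp 2 v‖ :=
  (EuclideanSpace.norm_eq _).symm

namespace Matrix

variable {ι 𝕜 : Type*} [RCLike 𝕜] [DecidableEq ι]

theorem IsHermitian.conjTranspose_one_add_smul {A : Matrix ι ι 𝕜} (hA : A.IsHermitian)
    {c : 𝕜} (hc : RCLike.re c = 0) : (1 + c • A)ᴴ = 1 - c • A := by
  have hstar : star c = -c := RCLike.ext (by simp [hc]) (by simp)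
  rw [conjTranspose_add, conjTranspose_one, conjTranspose_smul, hA.eq, hstar, neg_smul,
    sub_eq_add_neg]

variable [Fintype ι]

theorem inv_mul_conjTranspose_mem_unitaryGroup {B : Matrix ι ι 𝕜} (hB : IsUnit B.det)
    (hnormal : Commute B Bᴴ) : B⁻¹ * Bᴴ ∈ unitaryGroup ι 𝕜 := by
  have hBH : IsUnit Bᴴ.det := by rw [det_conjTranspose]; exact hB.star
  rw [mem_unitaryGroup_iff', star_eq_conjTranspose, conjTranspose_mul,
    conjTranspose_conjTranspose, conjTranspose_nonsing_inv]
  calc B * Bᴴ⁻¹ * (B⁻¹ * Bᴴ) = B * (B * Bᴴ)⁻¹ * Bᴴ := by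
        rw [mul_inv_rev]; simp only [Matrix.mul_assoc]
    _ = B * (Bᴴ * B)⁻¹ * Bᴴ := by rw [hnormal.eq]
    _ = 1 := by
        rw [mul_inv_rev, ← Matrix.mul_assoc, mul_nonsing_inv _ hB, Matrix.one_mul,
          nonsing_inv_mul _ hBH]

theorem norm_mulVec_of_mem_unitaryGroup {U : Matrix ι ι 𝕜} (hU : U ∈ unitaryGroup ι 𝕜)
    (v : ι → 𝕜) : ‖toLp 2 (U *ᵥ v)‖ = ‖toLp 2 v‖ :=
  (toEuclideanCLM (𝕜 := 𝕜) U).norm_map_of_mem_unitary (Unitary.map_mem _ hU) (toLp 2 v)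

namespace IsHermitian

variable {A : Matrix ι ι 𝕜} {c : 𝕜}

theorem norm_le_norm_one_add_smul_mulVec (hA : A.IsHermitian) (hc : RCLike.re c = 0)
    (v : ι → 𝕜) :
    ‖toLp 2 v‖ ≤ ‖toLp 2 ((1 + c • A) *ᵥ v)‖ := by
  have hsq : ‖toLp 2 v + c • toLp 2 (A *ᵥ v)‖ ^ 2 =
      ‖toLp 2 v‖ ^ 2 + ‖c‖ ^ 2 * ‖toLp 2 (A *ᵥ v)‖ ^ 2 :=
    (isSymmetric_toEuclideanLin_iff.mpr hA).norm_add_smul_apply_sq hc (toLp 2 v)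
  rw [add_mulVec, one_mulVec, smul_mulVec, toLp_add, toLp_smul]
  refine (sq_le_sq₀ (norm_nonneg _) (norm_nonneg _)).mp ?_
  rw [hsq]
  exact le_add_of_nonneg_right (by positivity)

theorem isUnit_det_one_add_smul (hA : A.IsHermitian) (hc : RCLike.re c = 0) :
    IsUnit (1 + c • A).det := by
  rw [← isUnit_iff_isUnit_det, ← mulVec_injective_iff_isUnit]
  intro v w hvw
  have h := hA.norm_le_norm_one_add_smul_mulVec hc (v - w)
  rw [mulVec_sub, hvw, sub_self, toLp_zero, norm_zero, norm_le_zero_iff] at h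
  simpa [sub_eq_zero] using h

theorem norm_inv_one_add_smul_mulVec_le (hA : A.IsHermitian) (hc : RCLike.re c = 0)
    (v : ι → 𝕜) :
    ‖toLp 2 ((1 + c • A)⁻¹ *ᵥ v)‖ ≤ ‖toLp 2 v‖ := by
  have h := hA.norm_le_norm_one_add_smul_mulVec hc ((1 + c • A)⁻¹ *ᵥ v)
  rwa [mulVec_mulVec, mul_nonsing_inv _ (hA.isUnit_det_one_add_smul hc), one_mulVec] at h

theorem inv_one_add_smul_mul_one_sub_smul_mem_unitaryGroup (hA : A.IsHermitian)
    (hc : RCLike.re c = 0) : (1 + c • A)⁻¹ * (1 - c • A) ∈ unitaryGroup ι 𝕜 := by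
  rw [← hA.conjTranspose_one_add_smul hc]
  refine inv_mul_conjTranspose_mem_unitaryGroup (hA.isUnit_det_one_add_smul hc) ?_
  rw [hA.conjTranspose_one_add_smul hc]
  exact (Commute.one_left _).add_left ((Commute.one_right _).sub_right (Commute.refl _))

end IsHermitian

section CrankNicolson

open Complex

noncomputable def crankNicolson (A : Matrix ι ι ℂ) (τ : ℝ) : Matrix ι ι ℂ :=
  (1 + (I * ((τ : ℂ) / 2)) • A)⁻¹ * (1 - (I * ((τ : ℂ) / 2)) • A)

noncomputable def crankNicolsonResidual (A : Matrix ι ι ℂ) (τ : ℝ) (v w : ι → ℂ) : ι → ℂ :=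
  (I / (τ : ℂ)) • (w - v) - A *ᵥ ((2 : ℂ)⁻¹ • (w + v))

theorem one_add_smul_mulVec_sub_one_sub_smul_mulVec (A : Matrix ι ι ℂ) {τ : ℝ} (hτ : τ ≠ 0)
    (v w : ι → ℂ) :
    (1 + (I * ((τ : ℂ) / 2)) • A) *ᵥ w - (1 - (I * ((τ : ℂ) / 2)) • A) *ᵥ v =
      -(I * τ) • crankNicolsonResidual A τ v w := by
  have hτ' : (τ : ℂ) ≠ 0 := Complex.ofReal_ne_zero.mpr hτ
  simp only [crankNicolsonResidual, add_mulVec, sub_mulVec, one_mulVec, smul_mulVec,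
    mulVec_smul, mulVec_add, smul_sub, smul_add, smul_smul]
  match_scalars <;> field_simp <;> simp

theorem IsHermitian.sub_crankNicolson_mulVec {A : Matrix ι ι ℂ} (hA : A.IsHermitian) {τ : ℝ}
    (hτ : τ ≠ 0) (v w : ι → ℂ) :
    w - crankNicolson A τ *ᵥ v =
      -(I * τ) • ((1 + (I * ((τ : ℂ) / 2)) • A)⁻¹ *ᵥ crankNicolsonResidual A τ v w) := by
  have hB := hA.isUnit_det_one_add_smul (c := I * ((τ : ℂ) / 2)) (by simp)
  rw [← mulVec_smul, ← one_add_smul_mulVec_sub_one_sub_smul_mulVec A hτ, mulVec_sub,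
    mulVec_mulVec, nonsing_inv_mul _ hB, one_mulVec, crankNicolson, mulVec_mulVec]

theorem IsHermitian.norm_sub_crankNicolson_mulVec_le {A : Matrix ι ι ℂ} (hA : A.IsHermitian)
    {τ : ℝ} (hτ : 0 < τ) (u x w : ι → ℂ) :
    ‖toLp 2 (w - crankNicolson A τ *ᵥ x)‖ ≤
      ‖toLp 2 (u - x)‖ + τ * ‖toLp 2 (crankNicolsonResidual A τ u w)‖ := by
  have hc : RCLike.re (I * ((τ : ℂ) / 2)) = 0 := by simp
  have hsplit : w - crankNicolson A τ *ᵥ x =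
      crankNicolson A τ *ᵥ (u - x) + (w - crankNicolson A τ *ᵥ u) := by
    rw [mulVec_sub]; abel
  have hnorm : ‖-(I * τ)‖ = τ := by simp [abs_of_pos hτ]
  rw [hsplit, toLp_add]
  refine (norm_add_le _ _).trans ?_
  rw [norm_mulVec_of_mem_unitaryGroup (U := crankNicolson A τ)
      (hA.inv_one_add_smul_mul_one_sub_smul_mem_unitaryGroup hc),
    hA.sub_crankNicolson_mulVec hτ.ne', toLp_smul, norm_smul, hnorm]
  gcongr
  exact hA.norm_inv_one_add_smul_mulVec_le hc _

end CrankNicolson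

end Matrix

/-- **Theorem 3.3, training error bound.** Let `A ∈ ℂ^{n×n}` be Hermitian,
`τ > 0`, `x_0 = u_0`, and let `(x_k)` follow the CN-DMD iteration
`x_{k+1} = (I + i(τ/2)A)⁻¹ (I - i(τ/2)A) x_k`.  With the residuals
`l_k(A) = i (u_{k+1} − u_k)/τ − A ((u_{k+1} + u_k)/2)` and errors `e_k = u_k − x_k`, one has
`‖e_{k+1}‖₂ ≤ τ ∑_{i=0}^{k} ‖l_i(A)‖₂` for every `k ≥ 0`. -/
theorem cnDMD_training_error_bound (n : ℕ) (A : Matrix (Fin n) (Fin n) ℂ)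
    (hA : A.IsHermitian) (τ : ℝ) (hτ : 0 < τ) (u x : ℕ → Fin n → ℂ)
    (h0 : x 0 = u 0)
    (hx : ∀ k : ℕ, x (k + 1) =
      ((1 + (Complex.I * ((τ : ℂ) / 2)) • A)⁻¹ *
          (1 - (Complex.I * ((τ : ℂ) / 2)) • A)).mulVec (x k)) :
    ∀ k : ℕ, euclNorm (u (k + 1) - x (k + 1)) ≤
      τ * ∑ i ∈ Finset.range (k + 1),
        euclNorm ((Complex.I / (τ : ℂ)) • (u (i + 1) - u i) -
          A.mulVec ((2 : ℂ)⁻¹ • (u (i + 1) + u i))) := by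
  set e : ℕ → ℝ := fun i => euclNorm (u i - x i)
  have step (i : ℕ) : e (i + 1) - e i ≤
      τ * euclNorm (crankNicolsonResidual A τ (u i) (u (i + 1))) := by
    simp only [e, euclNorm_eq_norm_toLp, hx i, sub_le_iff_le_add']
    exact hA.norm_sub_crankNicolson_mulVec_le hτ _ _ _
  have he0 : e 0 = 0 := by simp [e, h0, euclNorm_eq_norm_toLp]
  intro k
  calc e (k + 1) = ∑ i ∈ Finset.range (k + 1), (e (i + 1) - e i) := by
        rw [Finset.sum_range_sub, he0, sub_zero]
    _ ≤ _ := by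
        rw [Finset.mul_sum]
        exact Finset.sum_le_sum fun i _ => step i
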